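/- arXiv:1204.0299 — 4 statements merged into one kernel-verified Lean document; each statement's English description precedes it below -/
import Mathlib

section
/- There exists a finite set T of Wang tiles that tiles the plane only aperiodically: there is a valid tiling of ℤ × ℤ by tiles from T, but there is no valid tiling f of ℤ × ℤ by tiles from T that is periodic, i.e. no valid tiling f for which there exists n ≥ 1 with f(x + n, y) = f(x, y) and f(x, y + n) = f(x, y) for all (x, y) ∈ ℤ × ℤ. -/
/-- A Wang tile: a quadruple of colors (north, east, south, west). -/
abbrev WangTile : Type := ℕ × ℕ × ℕ × ℕ

def WangTile.north (t : WangTile) : ℕ := t.1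
def WangTile.east (t : WangTile) : ℕ := t.2.1
def WangTile.south (t : WangTile) : ℕ := t.2.2.1
def WangTile.west (t : WangTile) : ℕ := t.2.2.2

/-- `f` is a valid tiling of the region `R` by tiles from `T`. -/
def IsValidTiling (T : Set WangTile) (R : Set (ℤ × ℤ)) (f : ℤ × ℤ → WangTile) : Prop :=
  (∀ p ∈ R, f p ∈ T) ∧
  (∀ x y : ℤ, (x, y) ∈ R → (x + 1, y) ∈ R → (f (x, y)).east = (f (x + 1, y)).west) ∧
  (∀ x y : ℤ, (x, y) ∈ R → (x, y + 1) ∈ R → (f (x, y)).north = (f (x, y + 1)).south)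

open Finset

/-! Kari's aperiodic tile set.  Its rows encode multiplications of numbers `x ∈ (2/3, 2]`, written
as the bi-infinite digit strings `k ↦ ⌊k x⌋ - ⌊(k - 1) x⌋`, by `2` (when `x ≤ 1`) or by `2/3`
(when `x > 1`); east/west colors are the carries of the multiplication.  This map permutes
`(2/3, 2]`, so the integer orbit of `1` produces a tiling of the plane, one row per orbit point.

In a tiling of period `n`, summing the tile identity `q · north = 2 · south + west - east` along a
horizontal period makes the carries telescope, so the digit sums `S m` of the rows satisfy
`q · S (m + 1) = 2 · S m` with `q ∈ {1, 3}` odd.  Vertical periodicity then gives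
`Q · S 0 = 2 ^ n · S 0` with `Q` odd, whence `S 0 = 0`.  This is impossible, since a tile with
south digit `0` has east colour `0` and west colour `1`, so no two of them can be neighbours. -/

theorem isValidTiling_univ_iff {T : Set WangTile} {f : ℤ × ℤ → WangTile} :
    IsValidTiling T Set.univ f ↔ (∀ p, f p ∈ T) ∧
      (∀ x y, (f (x, y)).east = (f (x + 1, y)).west) ∧
      ∀ x y, (f (x, y)).north = (f (x, y + 1)).south := by
  simp [IsValidTiling]

theorem Finset.mul_sum_range_eq_of_telescoping {N S W : ℕ → ℤ} {a b : ℤ} {n : ℕ}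
    (h : ∀ k, b * N k = a * S k + (W k - W (k + 1))) (hW : W n = W 0) :
    b * ∑ k ∈ range n, N k = a * ∑ k ∈ range n, S k := by
  simp only [mul_sum, h, sum_add_distrib, sum_range_sub', hW, sub_self, add_zero]

theorem eq_zero_of_odd_mul_eq_two_mul {S : ℕ → ℤ} {n : ℕ} (hn : n ≠ 0)
    (h : ∀ m, ∃ b, Odd b ∧ b * S (m + 1) = 2 * S m) (hS : S n = S 0) : S 0 = 0 := by
  have key : ∀ m, ∃ B, Odd B ∧ B * S m = 2 ^ m * S 0 := by
    intro m
    induction m with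
    | zero => exact ⟨1, odd_one, by simp⟩
    | succ m ih =>
      obtain ⟨B, hB, hBS⟩ := ih
      obtain ⟨b, hb, hbS⟩ := h m
      exact ⟨b * B, hb.mul hB, by linear_combination B * hbS + 2 * hBS⟩
  obtain ⟨B, hB, hBS⟩ := key n
  by_contra h0
  rw [hS, mul_left_inj' h0] at hBS
  rw [hBS, Int.odd_pow] at hB
  exact hn (hB.resolve_left (by decide))

def balancedDigit (x : ℚ) (k : ℤ) : ℤ := ⌊k * x⌋ - ⌊(k - 1) * x⌋

/-- The carry out of position `k` when multiplying the balanced representation of `x` by `p / q`. -/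
def balancedCarry (p q : ℤ) (x : ℚ) (k : ℤ) : ℤ := p * ⌊k * x⌋ - q * ⌊k * (p / q * x)⌋

theorem le_balancedDigit {x : ℚ} {c : ℤ} (h : c ≤ x) (k : ℤ) : c ≤ balancedDigit x k := by
  have : ⌊(k - 1) * x + c⌋ ≤ ⌊k * x⌋ := Int.floor_le_floor (by linarith)
  rw [Int.floor_add_intCast] at this
  unfold balancedDigit
  omega

theorem balancedDigit_le {x : ℚ} {c : ℤ} (h : x ≤ c) (k : ℤ) : balancedDigit x k ≤ c := by
  have : ⌊k * x⌋ ≤ ⌊(k - 1) * x + c⌋ := Int.floor_le_floor (by linarith)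
  rw [Int.floor_add_intCast] at this
  unfold balancedDigit
  omega

theorem mul_balancedDigit_mul (p q : ℤ) (x : ℚ) (k : ℤ) :
    q * balancedDigit (p / q * x) k =
      p * balancedDigit x k + balancedCarry p q x (k - 1) - balancedCarry p q x k := by
  unfold balancedDigit balancedCarry
  push_cast
  ring

section Carry

variable {p q : ℤ} (x : ℚ) (k : ℤ)

theorem balancedCarry_lt (hp : 0 ≤ p) (hq : 0 < q) : balancedCarry p q x k < q := by
  have hfl := Int.floor_le (k * x)
  have hlt := Int.lt_floor_add_one (k * (p / q * x))
  have hmul : (q : ℚ) * (k * (p / q * x)) = p * (k * x) := by field_simp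
  have : (balancedCarry p q x k : ℚ) < q := by
    unfold balancedCarry
    push_cast
    nlinarith [(Int.cast_nonneg (R := ℚ) hp), (Int.cast_pos (R := ℚ)).mpr hq]
  exact_mod_cast this

theorem neg_lt_balancedCarry (hp : 0 < p) (hq : 0 < q) : -p < balancedCarry p q x k := by
  have hlt := Int.lt_floor_add_one (k * x)
  have hfl := Int.floor_le (k * (p / q * x))
  have hmul : (q : ℚ) * (k * (p / q * x)) = p * (k * x) := by field_simp
  have : (-p : ℚ) < balancedCarry p q x k := by
    unfold balancedCarry
    push_cast
    nlinarith [(Int.cast_pos (R := ℚ)).mpr hp, (Int.cast_pos (R := ℚ)).mpr hq]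
  exact_mod_cast this

end Carry

namespace Kari

/-- The two families of tiles: multiplication by `2` with carries `c ∈ {-1, 0}` coloured `c + 1`,
and multiplication by `2/3` with carries `c ∈ {-1, …, 2}` coloured `c + 11`. -/
def IsTile (t : WangTile) : Prop :=
  (t.south ≤ 1 ∧ 1 ≤ t.north ∧ t.north ≤ 2 ∧ t.west ≤ 1 ∧ t.east ≤ 1 ∧
    (t.north : ℤ) = 2 * t.south + t.west - t.east) ∨
  (1 ≤ t.south ∧ t.south ≤ 2 ∧ t.north ≤ 2 ∧ 10 ≤ t.west ∧ t.west ≤ 13 ∧ 10 ≤ t.east ∧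
    t.east ≤ 13 ∧ 3 * (t.north : ℤ) = 2 * t.south + t.west - t.east)

instance : DecidablePred IsTile := fun t => by unfold IsTile; infer_instance

def tiles : Finset WangTile :=
  (range 14 ×ˢ range 14 ×ˢ range 14 ×ˢ range 14).filter IsTile

theorem mem_tiles {t : WangTile} : t ∈ tiles ↔ IsTile t := by
  refine ⟨fun h => (mem_filter.mp h).2, fun h => mem_filter.mpr ⟨?_, h⟩⟩
  obtain ⟨n, e, s, w⟩ := t
  simp only [IsTile, WangTile.north, WangTile.east, WangTile.south, WangTile.west] at h
  simp only [mem_product, mem_range]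
  omega

/-- The denominator of the multiplier `2 / multiplierDen t` computed by a tile `t`. -/
def multiplierDen (t : WangTile) : ℤ := if t.west ≤ 1 then 1 else 3

theorem odd_multiplierDen (t : WangTile) : Odd (multiplierDen t) := by
  unfold multiplierDen
  split_ifs
  exacts [odd_one, by decide]

namespace IsTile

variable {t : WangTile}

theorem multiplierDen_mul_north (ht : IsTile t) :
    multiplierDen t * t.north = 2 * t.south + t.west - t.east := by
  unfold multiplierDen
  split_ifs <;> unfold IsTile at ht <;> omega

theorem east_le_one_iff (ht : IsTile t) : t.east ≤ 1 ↔ t.west ≤ 1 := by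
  unfold IsTile at ht
  omega

theorem east_eq_zero_and_west_eq_one (ht : IsTile t) (h : t.south = 0) :
    t.east = 0 ∧ t.west = 1 := by
  unfold IsTile at ht
  omega

end IsTile

/-- Row `k ↦ rowTile p q o x k` multiplies the balanced representation of `x` by `p / q`; carries
are shifted by `o` to become colours. -/
def rowTile (p q o : ℤ) (x : ℚ) (k : ℤ) : WangTile :=
  ((balancedDigit (p / q * x) k).toNat, (balancedCarry p q x k + o).toNat,
    (balancedDigit x k).toNat, (balancedCarry p q x (k - 1) + o).toNat)

theorem rowTile_east_eq_west (p q o : ℤ) (x : ℚ) (k : ℤ) :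
    (rowTile p q o x k).east = (rowTile p q o x (k + 1)).west := by
  simp [rowTile, WangTile.east, WangTile.west]

theorem rowTile_isTile_of_le_one {x : ℚ} (hx : x ∈ Set.Ioc (2 / 3) 2) (h1 : x ≤ 1) (k : ℤ) :
    IsTile (rowTile 2 1 1 x k) := by
  obtain ⟨hx0, -⟩ := hx
  have hs0 := le_balancedDigit (c := 0) (by push_cast; linarith) k
  have hs1 := balancedDigit_le (c := 1) (x := x) (by push_cast; linarith) k
  have hn1 := le_balancedDigit (c := 1) (x := (2 : ℤ) / (1 : ℤ) * x) (by push_cast; linarith) k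
  have hn2 := balancedDigit_le (c := 2) (x := (2 : ℤ) / (1 : ℤ) * x) (by push_cast; linarith) k
  have he0 := neg_lt_balancedCarry (p := 2) (q := 1) x k (by norm_num) (by norm_num)
  have he1 := balancedCarry_lt (p := 2) (q := 1) x k (by norm_num) (by norm_num)
  have hw0 := neg_lt_balancedCarry (p := 2) (q := 1) x (k - 1) (by norm_num) (by norm_num)
  have hw1 := balancedCarry_lt (p := 2) (q := 1) x (k - 1) (by norm_num) (by norm_num)
  have hid := mul_balancedDigit_mul 2 1 x k
  left
  simp only [rowTile, WangTile.north, WangTile.east, WangTile.south, WangTile.west]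
  omega

theorem rowTile_isTile_of_one_lt {x : ℚ} (hx : x ∈ Set.Ioc (2 / 3) 2) (h1 : 1 < x) (k : ℤ) :
    IsTile (rowTile 2 3 11 x k) := by
  obtain ⟨-, hx2⟩ := hx
  have hs1 := le_balancedDigit (c := 1) (x := x) (by push_cast; linarith) k
  have hs2 := balancedDigit_le (c := 2) (x := x) (by push_cast; linarith) k
  have hn0 := le_balancedDigit (c := 0) (x := (2 : ℤ) / (3 : ℤ) * x) (by push_cast; linarith) k
  have hn2 := balancedDigit_le (c := 2) (x := (2 : ℤ) / (3 : ℤ) * x) (by push_cast; linarith) k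
  have he0 := neg_lt_balancedCarry (p := 2) (q := 3) x k (by norm_num) (by norm_num)
  have he1 := balancedCarry_lt (p := 2) (q := 3) x k (by norm_num) (by norm_num)
  have hw0 := neg_lt_balancedCarry (p := 2) (q := 3) x (k - 1) (by norm_num) (by norm_num)
  have hw1 := balancedCarry_lt (p := 2) (q := 3) x (k - 1) (by norm_num) (by norm_num)
  have hid := mul_balancedDigit_mul 2 3 x k
  right
  simp only [rowTile, WangTile.north, WangTile.east, WangTile.south, WangTile.west]
  omega

def step (x : ℚ) : ℚ := if x ≤ 1 then 2 * x else 2 / 3 * x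

def row (x : ℚ) : ℤ → WangTile := if x ≤ 1 then rowTile 2 1 1 x else rowTile 2 3 11 x

theorem bijOn_step : Set.BijOn step (Set.Ioc (2 / 3) 2) (Set.Ioc (2 / 3) 2) := by
  refine ⟨fun x ⟨hx0, hx2⟩ => ?_, fun x ⟨hx0, hx2⟩ y ⟨hy0, hy2⟩ hxy => ?_, fun y ⟨hy0, hy2⟩ => ?_⟩
  · unfold step
    split_ifs <;> constructor <;> linarith
  · unfold step at hxy
    split_ifs at hxy <;> linarith
  · by_cases hy : y ≤ 4 / 3
    · refine ⟨3 / 2 * y, ⟨by linarith, by linarith⟩, ?_⟩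
      rw [step, if_neg (by linarith)]
      ring
    · refine ⟨y / 2, ⟨by linarith, by linarith⟩, ?_⟩
      rw [step, if_pos (by linarith)]
      ring

theorem row_isTile {x : ℚ} (hx : x ∈ Set.Ioc (2 / 3) 2) (k : ℤ) : IsTile (row x k) := by
  unfold row
  split_ifs with h1
  · exact rowTile_isTile_of_le_one hx h1 k
  · exact rowTile_isTile_of_one_lt hx (not_le.mp h1) k

theorem row_east_eq_west (x : ℚ) (k : ℤ) : (row x k).east = (row x (k + 1)).west := by
  unfold row
  split_ifs <;> apply rowTile_east_eq_west

theorem row_north_eq_south_step (x : ℚ) (k : ℤ) : (row x k).north = (row (step x) k).south := by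
  unfold row step
  split_ifs <;> norm_num [rowTile, WangTile.north, WangTile.south]

theorem exists_isValidTiling_tiles : ∃ f, IsValidTiling (↑tiles) Set.univ f := by
  let e : Equiv.Perm (Set.Ioc (2 / 3 : ℚ) 2) := bijOn_step.equiv
  let orbit (m : ℤ) : ℚ := (e ^ m) ⟨1, by norm_num, by norm_num⟩
  have orbit_succ (m : ℤ) : orbit (m + 1) = step (orbit m) := by
    simp only [orbit, add_comm m, zpow_one_add, Equiv.Perm.mul_apply]
    rfl
  refine ⟨fun p => row (orbit p.2) p.1, isValidTiling_univ_iff.mpr ⟨?_, ?_, ?_⟩⟩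
  · exact fun p => mem_tiles.mpr (row_isTile (Subtype.prop _) p.1)
  · exact fun x y => row_east_eq_west _ x
  · intro x y
    simp only [orbit_succ]
    exact row_north_eq_south_step _ x

def rowSum (f : ℤ × ℤ → WangTile) (n : ℕ) (m : ℤ) : ℤ := ∑ k ∈ range n, ((f (k, m)).south : ℤ)

section PeriodicTiling

variable {f : ℤ × ℤ → WangTile}

theorem multiplierDen_eq_of_isValidTiling (hf : IsValidTiling (↑tiles) Set.univ f) (k m : ℤ) :
    multiplierDen (f (k, m)) = multiplierDen (f (0, m)) := by
  obtain ⟨hT, hE, -⟩ := isValidTiling_univ_iff.mp hf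
  have hsucc (k : ℤ) : multiplierDen (f (k + 1, m)) = multiplierDen (f (k, m)) := by
    simp only [multiplierDen, ← hE, (mem_tiles.mp (hT (k, m))).east_le_one_iff]
  induction k using Int.induction_on with
  | zero => rfl
  | succ k ih => rw [hsucc, ih]
  | pred k ih => rw [← ih, ← hsucc, sub_add_cancel]

theorem exists_odd_mul_rowSum_succ (hf : IsValidTiling (↑tiles) Set.univ f) {n : ℕ} {m : ℤ}
    (hper : f (n, m) = f (0, m)) : ∃ b, Odd b ∧ b * rowSum f n (m + 1) = 2 * rowSum f n m := by
  obtain ⟨hT, hE, hN⟩ := isValidTiling_univ_iff.mp hf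
  refine ⟨multiplierDen (f (0, m)), odd_multiplierDen _, ?_⟩
  unfold rowSum
  simp only [← hN]
  refine mul_sum_range_eq_of_telescoping (W := fun k : ℕ => ((f (k, m)).west : ℤ)) (fun k => ?_)
    (by simp [hper])
  rw [← multiplierDen_eq_of_isValidTiling hf k m, (mem_tiles.mp (hT _)).multiplierDen_mul_north,
    hE]
  push_cast
  ring

theorem rowSum_pos (hf : IsValidTiling (↑tiles) Set.univ f) {n : ℕ} (hn : n ≠ 0) {m : ℤ}
    (hper : f (n, m) = f (0, m)) : 0 < rowSum f n m := by
  obtain ⟨hT, hE, -⟩ := isValidTiling_univ_iff.mp hf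
  obtain ⟨j, rfl⟩ := Nat.exists_eq_succ_of_ne_zero hn
  refine (sum_nonneg fun k _ => Int.natCast_nonneg _).lt_of_ne fun h0 => ?_
  have hzero := (sum_eq_zero_iff_of_nonneg fun k _ => Int.natCast_nonneg _).mp h0.symm
  have h1 := (mem_tiles.mp (hT (j, m))).east_eq_zero_and_west_eq_one
    (by exact_mod_cast hzero j (by simp))
  have h2 := (mem_tiles.mp (hT (0, m))).east_eq_zero_and_west_eq_one
    (by exact_mod_cast hzero 0 (by simp))
  have hmatch := hE j m
  push_cast at hper
  rw [hper] at hmatch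
  omega

theorem not_periodic_of_isValidTiling (hf : IsValidTiling (↑tiles) Set.univ f) {n : ℕ}
    (hn : n ≠ 0) : ¬ ∀ x y : ℤ, f (x + n, y) = f (x, y) ∧ f (x, y + n) = f (x, y) := by
  intro hper
  have hrow (y : ℤ) : f (n, y) = f (0, y) := by simpa using (hper 0 y).1
  have hS : rowSum f n n = rowSum f n 0 := by
    unfold rowSum
    exact sum_congr rfl fun k _ => by simpa using congrArg WangTile.south (hper k 0).2
  have hrowSum (m : ℕ) : ∃ b, Odd b ∧ b * rowSum f n (m + 1 : ℕ) = 2 * rowSum f n m := by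
    exact_mod_cast exists_odd_mul_rowSum_succ hf (hrow m)
  exact (rowSum_pos hf hn (hrow 0)).ne'
    (eq_zero_of_odd_mul_eq_two_mul (S := fun m : ℕ => rowSum f n m) hn hrowSum hS)

end PeriodicTiling

end Kari

/-- There is a finite set of Wang tiles that tiles the plane, but only aperiodically. -/
theorem exists_aperiodic_wang_tile_set :
    ∃ T : Finset WangTile,
      (∃ f, IsValidTiling (↑T) Set.univ f) ∧
      ¬ ∃ f, IsValidTiling (↑T) Set.univ f ∧
        ∃ n : ℕ, 1 ≤ n ∧ ∀ x y : ℤ,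
          f (x + (n : ℤ), y) = f (x, y) ∧ f (x, y + (n : ℤ)) = f (x, y) := by
  refine ⟨Kari.tiles, Kari.exists_isValidTiling_tiles, ?_⟩
  rintro ⟨f, hf, n, hn, hper⟩
  exact Kari.not_periodic_of_isValidTiling hf (Nat.one_le_iff_ne_zero.mp hn) hper
end

section
/- Goodman's inequality: for every finite simple graph G with nonempty vertex set, t(K₃, G) ≥ 2·t(K₂, G)² − t(K₂, G), where K₂ and K₃ are the complete graphs on 2 and 3 vertices respectively. -/
/-- The homomorphism density `t(H, G)`: the number of graph homomorphisms `H →g G`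
divided by `|V(G)| ^ |V(H)|`, i.e. the probability that a uniformly random map
`V(H) → V(G)` is a homomorphism. -/
noncomputable def homDensity {α β : Type} [Fintype α] [Fintype β]
    (H : SimpleGraph α) (G : SimpleGraph β) : ℝ :=
  (Nat.card (H →g G) : ℝ) / (Fintype.card β : ℝ) ^ (Fintype.card α)

/-!
Homomorphisms `K₃ → G` are darts `(u, v)` of `G` together with a common neighbour of `u` and `v`,
and the endpoints of a dart have at least `deg u + deg v - n` common neighbours. Summing over the
darts, where `∑ (deg u + deg v) = 2 ∑ deg²`, gives `hom(K₃, G) ≥ 2 ∑ deg² - n · hom(K₂, G)`; since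
`hom(K₂, G) = ∑ deg`, Cauchy–Schwarz `(∑ deg)² ≤ n ∑ deg²` finishes the proof.
-/

open Finset

namespace SimpleGraph

variable {V : Type*} (G : SimpleGraph V)

def homTopFinTwoEquivDart : ((⊤ : SimpleGraph (Fin 2)) →g G) ≃ G.Dart where
  toFun f := ⟨(f 0, f 1), f.map_adj (by decide)⟩
  invFun d := ⟨![d.fst, d.snd], by
    intro i j hij
    fin_cases i <;> fin_cases j <;> simp_all [d.adj, d.adj.symm]⟩
  left_inv f := by ext i; fin_cases i <;> rfl
  right_inv d := rfl

variable [Fintype V] [DecidableRel G.Adj]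

def homTopFinThreeEquivSigma [DecidableEq V] : ((⊤ : SimpleGraph (Fin 3)) →g G) ≃
    Σ d : G.Dart, ↥(G.neighborFinset d.fst ∩ G.neighborFinset d.snd) where
  toFun f := ⟨⟨(f 0, f 1), f.map_adj (by decide)⟩, f 2, by
    simp only [mem_inter, mem_neighborFinset]
    exact ⟨f.map_adj (by decide), f.map_adj (by decide)⟩⟩
  invFun p := ⟨![p.1.fst, p.1.snd, p.2], by
    obtain ⟨d, w, hw⟩ := p
    rw [mem_inter, mem_neighborFinset, mem_neighborFinset] at hw
    intro i j hij
    fin_cases i <;> fin_cases j <;> simp_all [d.adj, d.adj.symm, hw.1.symm, hw.2.symm]⟩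
  left_inv f := by ext i; fin_cases i <;> rfl
  right_inv p := rfl

theorem card_hom_top_fin_two :
    Nat.card ((⊤ : SimpleGraph (Fin 2)) →g G) = ∑ v, G.degree v := by
  rw [Nat.card_congr G.homTopFinTwoEquivDart, Nat.card_eq_fintype_card,
    dart_card_eq_sum_degrees]

theorem card_hom_top_fin_three [DecidableEq V] : Nat.card ((⊤ : SimpleGraph (Fin 3)) →g G) =
    ∑ d : G.Dart, #(G.neighborFinset d.fst ∩ G.neighborFinset d.snd) := by
  rw [Nat.card_congr G.homTopFinThreeEquivSigma, Nat.card_eq_fintype_card,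
    Fintype.card_sigma]
  simp only [Fintype.card_coe]

theorem sum_dart_fst {M : Type*} [AddCommMonoid M] (f : V → M) :
    ∑ d : G.Dart, f d.fst = ∑ v, G.degree v • f v := by
  classical
  rw [← sum_fiberwise' univ (fun d : G.Dart => d.fst) f]
  refine sum_congr rfl fun v _ => ?_
  rw [sum_const, ← dart_fst_fiber_card_eq_degree]

theorem sum_dart_snd {M : Type*} [AddCommMonoid M] (f : V → M) :
    ∑ d : G.Dart, f d.snd = ∑ v, G.degree v • f v := by
  rw [← sum_dart_fst]
  exact Equiv.sum_comp (Function.Involutive.toPerm _ Dart.symm_involutive)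
    (fun d : G.Dart => f d.fst)

theorem sum_dart_degree_fst_add_degree_snd :
    ∑ d : G.Dart, (G.degree d.fst + G.degree d.snd) = 2 * ∑ v, G.degree v ^ 2 := by
  rw [sum_add_distrib, sum_dart_fst G (G.degree ·), sum_dart_snd G (G.degree ·), ← two_mul]
  simp only [smul_eq_mul, sq]

theorem degree_add_degree_le_card_inter_add_card [DecidableEq V] (u v : V) :
    G.degree u + G.degree v ≤
      #(G.neighborFinset u ∩ G.neighborFinset v) + Fintype.card V := by
  rw [← card_neighborFinset_eq_degree, ← card_neighborFinset_eq_degree,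
    ← card_inter_add_card_union]
  exact Nat.add_le_add_left (card_le_univ _) _

theorem two_mul_sum_degree_sq_le :
    2 * ∑ v, G.degree v ^ 2 ≤ Nat.card ((⊤ : SimpleGraph (Fin 3)) →g G) +
      Fintype.card V * Nat.card ((⊤ : SimpleGraph (Fin 2)) →g G) := by
  classical
  calc 2 * ∑ v, G.degree v ^ 2 = ∑ d : G.Dart, (G.degree d.fst + G.degree d.snd) :=
        (sum_dart_degree_fst_add_degree_snd G).symm
    _ ≤ ∑ d : G.Dart, (#(G.neighborFinset d.fst ∩ G.neighborFinset d.snd) + Fintype.card V) :=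
        sum_le_sum fun d _ => G.degree_add_degree_le_card_inter_add_card d.fst d.snd
    _ = _ := by
        rw [sum_add_distrib, sum_const, card_univ, smul_eq_mul, card_hom_top_fin_three,
          card_hom_top_fin_two, ← dart_card_eq_sum_degrees, mul_comm]

end SimpleGraph

/-- Goodman's inequality: `t(K₃, G) ≥ 2 t(K₂, G)² − t(K₂, G)` for every finite graph `G`
with nonempty vertex set. -/
theorem goodman_inequality {β : Type} [Fintype β] [Nonempty β] (G : SimpleGraph β) :
    homDensity (⊤ : SimpleGraph (Fin 3)) G ≥
      2 * homDensity (⊤ : SimpleGraph (Fin 2)) G ^ 2 -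
        homDensity (⊤ : SimpleGraph (Fin 2)) G := by
  classical
  have hn : (0 : ℝ) < Fintype.card β := by exact_mod_cast Fintype.card_pos
  have cauchy_schwarz : (Nat.card ((⊤ : SimpleGraph (Fin 2)) →g G) : ℝ) ^ 2 ≤
      Fintype.card β * ∑ v, (G.degree v : ℝ) ^ 2 := by
    rw [SimpleGraph.card_hom_top_fin_two, Nat.cast_sum, ← card_univ]
    exact sq_sum_le_card_mul_sum_sq
  have degree_bound : 2 * ∑ v, (G.degree v : ℝ) ^ 2 ≤
      Nat.card ((⊤ : SimpleGraph (Fin 3)) →g G) +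
        Fintype.card β * Nat.card ((⊤ : SimpleGraph (Fin 2)) →g G) := by
    exact_mod_cast G.two_mul_sum_degree_sq_le
  simp only [homDensity, Fintype.card_fin]
  generalize (Fintype.card β : ℝ) = n at *
  generalize (Nat.card ((⊤ : SimpleGraph (Fin 2)) →g G) : ℝ) = N₂ at *
  generalize (Nat.card ((⊤ : SimpleGraph (Fin 3)) →g G) : ℝ) = N₃ at *
  have counts : 2 * N₂ ^ 2 - n ^ 2 * N₂ ≤ n * N₃ := by
    nlinarith [mul_le_mul_of_nonneg_left degree_bound hn.le]
  calc 2 * (N₂ / n ^ 2) ^ 2 - N₂ / n ^ 2 = (2 * N₂ ^ 2 - n ^ 2 * N₂) / n ^ 4 := by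
        field_simp
    _ ≤ n * N₃ / n ^ 4 := by gcongr
    _ = N₃ / n ^ 3 := by field_simp
end

section
/- Let S be any subset of ℕ. In the group G_S = ⟨a, b, c, d ∣ aⁿ b a⁻ⁿ = cⁿ d c⁻ⁿ for all n ∈ S⟩ — formally, the presented group PresentedGroup R_S on the free group on four generators a, b, c, d with relator set R_S = { aⁿ·b·a⁻ⁿ·(cⁿ·d·c⁻ⁿ)⁻¹ : n ∈ S } — the element represented by the word aⁿ b a⁻ⁿ cⁿ d⁻¹ c⁻ⁿ equals the identity if and only if n ∈ S, for every n ∈ ℕ. -/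
/-!
Relators for `n ∈ S` are trivial by definition; for the converse one needs a group in which
`aᵐ b a⁻ᵐ = cᵐ d c⁻ᵐ` holds exactly for `m ∈ S`. Taking `c = g a g⁻¹` and `d = g b g⁻¹`, the
element `cᵐ d c⁻ᵐ` is the conjugate of `aᵐ b a⁻ᵐ` by `g`, so the relation for `m` says that `g`
commutes with `aᵐ b a⁻ᵐ`. In the wreath product `S₃ ≀ ℤ`, with `a` the shift and `b` a
transposition `h` placed in coordinate `0`, the element `aᵐ b a⁻ᵐ` is `h` placed in coordinate `m`,
and a base element `g : ℤ → S₃` commutes with it iff `g m` commutes with `h`. So it suffices to let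
`g m` be `1` for `m ∈ S` and a transposition not commuting with `h` otherwise.
-/

namespace HigmanGS

/-- The generators `a, b, c, d` of the free group on four generators. -/
def a : FreeGroup (Fin 4) := FreeGroup.of 0
def b : FreeGroup (Fin 4) := FreeGroup.of 1
def c : FreeGroup (Fin 4) := FreeGroup.of 2
def d : FreeGroup (Fin 4) := FreeGroup.of 3

/-- The relator set `{ aⁿ b a⁻ⁿ (cⁿ d c⁻ⁿ)⁻¹ : n ∈ S }` of the group `G_S`. -/
def rels (S : Set ℕ) : Set (FreeGroup (Fin 4)) :=
  {g | ∃ n ∈ S, g = a ^ n * b * (a ^ n)⁻¹ * (c ^ n * d * (c ^ n)⁻¹)⁻¹}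

end HigmanGS

namespace RegularWreathProduct

variable {K Q : Type*} [Group K] [Group Q] [DecidableEq Q]

def mulSingle (q : Q) (x : K) : K ≀ᵣ Q := ⟨Pi.mulSingle q x, 1⟩

lemma inl_mul_mulSingle_mul_inv (p q : Q) (x : K) :
    inl p * mulSingle q x * (inl p)⁻¹ = mulSingle (p * q) x := by
  ext r
  · simp [mulSingle, Pi.mulSingle_apply, inv_mul_eq_iff_eq_mul]
  · simp [mulSingle]

lemma commute_mulSingle_iff (f : Q → K) (q : Q) (x : K) :
    Commute (⟨f, 1⟩ : K ≀ᵣ Q) (mulSingle q x) ↔ Commute (f q) x := by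
  simp only [commute_iff_eq, RegularWreathProduct.ext_iff, mulSingle, mul_left, mul_right,
    inv_one, one_mul, funext_iff, Pi.mul_apply, and_true]
  refine ⟨fun h => by simpa using h q, fun h r => ?_⟩
  rcases eq_or_ne r q with rfl | hr
  · simpa using h
  · simp [hr]

end RegularWreathProduct

namespace HigmanGS

open RegularWreathProduct Multiplicative

def relator (n : ℕ) : FreeGroup (Fin 4) :=
  a ^ n * b * (a ^ n)⁻¹ * (c ^ n * d * (c ^ n)⁻¹)⁻¹

lemma mk_relator (S : Set ℕ) (n : ℕ) :
    PresentedGroup.mk (rels S) (relator n) =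
      (PresentedGroup.of 0 : PresentedGroup (rels S)) ^ n * PresentedGroup.of 1 *
        ((PresentedGroup.of 0 : PresentedGroup (rels S)) ^ n)⁻¹ *
        (PresentedGroup.of 2 : PresentedGroup (rels S)) ^ n *
        (PresentedGroup.of 3 : PresentedGroup (rels S))⁻¹ *
        ((PresentedGroup.of 2 : PresentedGroup (rels S)) ^ n)⁻¹ := by
  simp only [relator, a, b, c, d, map_mul, map_pow, map_inv]
  group
  rfl

lemma lift_relator_eq_one_iff_commute {G : Type*} [Group G] (x y g : G) (n : ℕ) :
    FreeGroup.lift ![x, y, g * x * g⁻¹, g * y * g⁻¹] (relator n) = 1 ↔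
      Commute g (x ^ n * y * (x ^ n)⁻¹) := by
  have hconj : (g * x * g⁻¹) ^ n * (g * y * g⁻¹) * ((g * x * g⁻¹) ^ n)⁻¹ =
      g * (x ^ n * y * (x ^ n)⁻¹) * g⁻¹ := by
    rw [conj_pow]; group
  simp only [relator, a, b, c, d, map_mul, map_pow, map_inv, FreeGroup.lift_apply_of,
    Matrix.cons_val, hconj]
  rw [mul_inv_eq_one, eq_mul_inv_iff_mul_eq, eq_comm, commute_iff_eq]

open scoped Classical in
noncomputable def twist (S : Set ℕ) (q : Multiplicative ℤ) : Equiv.Perm (Fin 3) :=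
  if ∃ m ∈ S, (m : ℤ) = toAdd q then 1 else Equiv.swap 1 2

noncomputable def witness (S : Set ℕ) : Fin 4 → Equiv.Perm (Fin 3) ≀ᵣ Multiplicative ℤ :=
  let x := inl (ofAdd 1)
  let y := mulSingle 1 (Equiv.swap 0 1)
  let g := ⟨twist S, 1⟩
  ![x, y, g * x * g⁻¹, g * y * g⁻¹]

lemma lift_witness_relator_eq_one_iff (S : Set ℕ) (n : ℕ) :
    FreeGroup.lift (witness S) (relator n) = 1 ↔ n ∈ S := by
  rw [witness, lift_relator_eq_one_iff_commute, ← map_pow, inl_mul_mulSingle_mul_inv, mul_one,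
    commute_mulSingle_iff, twist]
  have hcast : (∃ m ∈ S, (m : ℤ) = toAdd (ofAdd (1 : ℤ) ^ n)) ↔ n ∈ S := by simp
  split_ifs with h <;> rw [hcast] at h
  · exact iff_of_true (Commute.one_left _) h
  · exact iff_of_false (by rw [commute_iff_eq]; decide) h

/-- In `G_S = ⟨a, b, c, d ∣ aⁿ b a⁻ⁿ = cⁿ d c⁻ⁿ for n ∈ S⟩`, the word
`aⁿ b a⁻ⁿ cⁿ d⁻¹ c⁻ⁿ` represents the identity if and only if `n ∈ S`. -/
theorem word_eq_one_iff_mem (S : Set ℕ) (n : ℕ) :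
    ((PresentedGroup.of 0 : PresentedGroup (rels S)) ^ n * PresentedGroup.of 1 *
        ((PresentedGroup.of 0 : PresentedGroup (rels S)) ^ n)⁻¹ *
        (PresentedGroup.of 2 : PresentedGroup (rels S)) ^ n *
        (PresentedGroup.of 3 : PresentedGroup (rels S))⁻¹ *
        ((PresentedGroup.of 2 : PresentedGroup (rels S)) ^ n)⁻¹ = 1) ↔ n ∈ S := by
  rw [← mk_relator, PresentedGroup.mk_eq_one_iff]
  refine ⟨fun h => ?_, fun hn => Subgroup.subset_normalClosure ⟨n, hn, rfl⟩⟩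
  have hrels : ∀ r ∈ rels S, FreeGroup.lift (witness S) r = 1 := by
    rintro _ ⟨m, hm, rfl⟩
    exact (lift_witness_relator_eq_one_iff S m).2 hm
  exact (lift_witness_relator_eq_one_iff S n).1
    (PresentedGroup.to_group_eq_one_of_mem_closure hrels _ h)

end HigmanGS
end

section
/- Rabin's theorem on games: there exists a computable function g : ℕ → ℕ such that in the three-move game where A chooses x₁, then B chooses x₂, then A chooses x₃, and A wins exactly when x₁ + x₂ = g(x₃): (1) player B has a winning strategy, i.e. for every x₁ ∈ ℕ there exists x₂ ∈ ℕ such that for all x₃ ∈ ℕ, x₁ + x₂ ≠ g(x₃); but (2) B has no computable winning strategy, i.e. there is no computable function w : ℕ → ℕ such that for all x₁, x₃ ∈ ℕ, x₁ + w(x₁) ≠ g(x₃). -/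
/-!
Post's simple-set construction. For each program `e`, put its output `y` on input `2e + 1` into
a c.e. set `R` whenever `y > 2e`. If `w` were a computable winning strategy for B, then
`h x = x + w x` would be computable with `h x ≥ x`; for a code `e` of `h` the output
`h (2e + 1) > 2e` lands in `R`, so A wins after `x₁ = 2e + 1`. On the other hand `R` has at most
`n` positive elements `≤ 2n`, so its complement is unbounded and B can always answer outside `R`.
-/

open Nat.Partrec Code Encodable

theorem exists_ge_notMem_of_forall_pos_mem_lt_two_mul (P : ℕ → Part ℕ) {R : Set ℕ}
    (hR : ∀ y ∈ R, 0 < y → ∃ e, 2 * e < y ∧ y ∈ P e) (a : ℕ) : ∃ n, a ≤ n ∧ n ∉ R := by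
  classical
  by_contra! hall
  have hsub : Finset.Icc (a + 1) (2 * a + 2) ⊆
      (Finset.range (a + 1)).image fun e => (P e).getOrElse 0 := by
    intro y hy
    rw [Finset.mem_Icc] at hy
    obtain ⟨e, he, hy⟩ := hR y (hall y (by omega)) (by omega)
    refine Finset.mem_image.2 ⟨e, Finset.mem_range.2 (by omega), ?_⟩
    rw [Part.getOrElse_of_dom _ (Part.dom_iff_mem.2 ⟨y, hy⟩), Part.get_eq_of_mem hy]
  have hcard := (Finset.card_le_card hsub).trans Finset.card_image_le
  simp only [Nat.card_Icc, Finset.card_range] at hcard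
  omega

def postEnum (n : ℕ) : ℕ :=
  let y := (evaln n.unpair.2 (Denumerable.ofNat Code n.unpair.1) (2 * n.unpair.1 + 1)).getD 0
  if 2 * n.unpair.1 < y then y else 0

theorem primrec_postEnum : Primrec postEnum := by
  have he : Primrec fun n : ℕ => n.unpair.1 := Primrec.fst.comp Primrec.unpair
  have hy : Primrec fun n : ℕ =>
      (evaln n.unpair.2 (Denumerable.ofNat Code n.unpair.1) (2 * n.unpair.1 + 1)).getD 0 :=
    Primrec.option_getD.comp (primrec_evaln.comp
      (((Primrec.snd.comp Primrec.unpair).pair ((Primrec.ofNat Code).comp he)).pair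
        (Primrec.succ.comp (Primrec.nat_mul.comp (Primrec.const 2) he))))
      (Primrec.const 0)
  exact Primrec.ite (Primrec.nat_lt.comp (Primrec.nat_mul.comp (Primrec.const 2) he) hy) hy
    (Primrec.const 0)

theorem exists_lt_postEnum_mem_eval {n : ℕ} (hn : 0 < postEnum n) :
    ∃ e, 2 * e < postEnum n ∧ postEnum n ∈ (Denumerable.ofNat Code e).eval (2 * e + 1) := by
  refine ⟨n.unpair.1, ?_⟩
  dsimp only [postEnum] at *
  cases hs : evaln n.unpair.2 (Denumerable.ofNat Code n.unpair.1) (2 * n.unpair.1 + 1) with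
  | none => simp [hs] at hn
  | some y =>
    simp only [hs, Option.getD_some] at hn ⊢
    split_ifs at hn ⊢ with hlt
    · exact ⟨hlt, evaln_sound hs⟩
    · omega

theorem exists_postEnum_eq {c : Code} {y : ℕ} (hy : y ∈ c.eval (2 * encode c + 1))
    (hlt : 2 * encode c < y) : ∃ n, postEnum n = y := by
  obtain ⟨s, hs⟩ := evaln_complete.1 hy
  refine ⟨Nat.pair (encode c) s, ?_⟩
  simp [postEnum, Option.mem_def.1 hs, hlt]

theorem exists_ge_notMem_range_postEnum (a : ℕ) : ∃ n, a ≤ n ∧ n ∉ Set.range postEnum :=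
  exists_ge_notMem_of_forall_pos_mem_lt_two_mul _
    (by rintro _ ⟨n, rfl⟩; exact exists_lt_postEnum_mem_eval) a

theorem exists_mem_range_postEnum {h : ℕ → ℕ} (hh : Computable h) (hle : ∀ x, x ≤ h x) :
    ∃ x, h x ∈ Set.range postEnum := by
  obtain ⟨c, hc⟩ := exists_code.1 (Partrec.nat_iff.1 hh.partrec)
  have hmem : h (2 * encode c + 1) ∈ c.eval (2 * encode c + 1) := by
    rw [hc]
    exact Part.mem_some _
  obtain ⟨n, hn⟩ := exists_postEnum_eq hmem (hle _)
  exact ⟨_, n, hn⟩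

/-- Rabin's theorem: there is a computable `g : ℕ → ℕ` such that, in the three-move game where
A wins exactly when `x₁ + x₂ = g x₃`, player B has a winning strategy, but no computable
winning strategy. -/
theorem rabin_game :
    ∃ g : ℕ → ℕ, Computable g ∧
      (∀ x₁ : ℕ, ∃ x₂ : ℕ, ∀ x₃ : ℕ, x₁ + x₂ ≠ g x₃) ∧
      ¬ ∃ w : ℕ → ℕ, Computable w ∧ ∀ x₁ x₃ : ℕ, x₁ + w x₁ ≠ g x₃ := by
  refine ⟨postEnum, primrec_postEnum.to_comp, fun x₁ => ?_, ?_⟩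
  · obtain ⟨n, hn, hnR⟩ := exists_ge_notMem_range_postEnum x₁
    exact ⟨n - x₁, fun x₃ h => hnR ⟨x₃, by omega⟩⟩
  · rintro ⟨w, hw, hwin⟩
    obtain ⟨x₁, x₃, hx₃⟩ := exists_mem_range_postEnum
      (Primrec.nat_add.to_comp.comp Computable.id hw) fun x => Nat.le_add_right x (w x)
    exact hwin x₁ x₃ hx₃.symm
end
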